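/- arXiv:2406.10897 — 6 statements merged into one kernel-verified Lean document; each statement's English description precedes it below -/
import Mathlib

section
/- Let K ≥ 1 and let Γ, N, ϱ, B, σ², P, h₁, D_mod, T_max > 0, and for each k let R_k^down > 0, R_k^up > 0, D_k ≥ 0. Suppose (T_down, T_br, T_loc, T_up) has nonnegative entries and satisfies: ϱ·Σ_{k=1}^K D_k + T_down + N·(T_br + T_loc + T_up) ≤ T_max; T_down · R_k^down ≥ Γ·D_k for all k; T_br · B·log₂(1 + h₁·P/(σ²·B)) ≥ D_mod; and T_up · R_k^up ≥ D_mod for all k. Then T_loc ≤ T_max/N − D_mod/min_k R_k^up − D_mod/(B·log₂(1 + h₁·P/(σ²·B))) − (ϱ/N)·Σ_{k=1}^K D_k − (Γ/N)·max_k (D_k/R_k^down). (Optimality part of Theorem 1: the local training time of any feasible time allocation is at most the value given in closed form.) -/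
/-!
Each constraint bounds one phase from below by its slowest device: the upload by the
device with the smallest rate `min_k R_k^up`, the download of synthetic data by the largest
ratio `D_k / R_k^down`, the broadcast by the Shannon rate of the weakest channel (which is
positive since its SNR is). Substituting these lower bounds into the latency budget and
dividing by `N` leaves exactly the stated upper bound for `T_loc`.
-/

open Finset

theorem Real.mul_logb_one_add_pos {B snr : ℝ} (hB : 0 < B) (hsnr : 0 < snr) :
    0 < B * Real.logb 2 (1 + snr) :=
  mul_pos hB (Real.logb_pos one_lt_two (lt_add_of_pos_right 1 hsnr))

namespace Finset

variable {ι 𝕜 : Type*} [Field 𝕜] [LinearOrder 𝕜] [IsStrictOrderedRing 𝕜]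
  {s : Finset ι} (hs : s.Nonempty) {r : ι → 𝕜} {a t : 𝕜}

theorem div_inf'_le_of_le_mul (hr : ∀ k ∈ s, 0 < r k) (h : ∀ k ∈ s, a ≤ t * r k) :
    a / s.inf' hs r ≤ t := by
  obtain ⟨k, hk, hmin⟩ := exists_mem_eq_inf' hs r
  rw [hmin, div_le_iff₀ (hr k hk)]
  exact h k hk

theorem mul_sup'_div_le_of_mul_le_mul {d : ι → 𝕜} (hr : ∀ k ∈ s, 0 < r k)
    (h : ∀ k ∈ s, a * d k ≤ t * r k) :
    a * s.sup' hs (fun k => d k / r k) ≤ t := by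
  obtain ⟨k, hk, hmax⟩ := exists_mem_eq_sup' hs (fun k => d k / r k)
  rw [hmax, ← mul_div_assoc, div_le_iff₀ (hr k hk)]
  exact h k hk

end Finset

theorem stmt_5_general
    (K : ℕ)
    (Γ N ϱ B σ2 P h1 Dmod Tmax : ℝ)
    (hN : 0 < N) (hB : 0 < B) (hσ2 : 0 < σ2)
    (hP : 0 < P) (hh1 : 0 < h1)
    (Rdown Rup D : Fin K → ℝ)
    (hRdown : ∀ k, 0 < Rdown k) (hRup : ∀ k, 0 < Rup k)
    (hne : (Finset.univ : Finset (Fin K)).Nonempty)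
    (Tdown Tbr Tloc Tup : ℝ)
    (hlatency : ϱ * (∑ k, D k) + Tdown + N * (Tbr + Tloc + Tup) ≤ Tmax)
    (hdown : ∀ k, Tdown * Rdown k ≥ Γ * D k)
    (hbr : Tbr * (B * Real.logb 2 (1 + h1 * P / (σ2 * B))) ≥ Dmod)
    (hup : ∀ k, Tup * Rup k ≥ Dmod) :
    Tloc ≤ Tmax / N - Dmod / Finset.univ.inf' hne Rup
        - Dmod / (B * Real.logb 2 (1 + h1 * P / (σ2 * B)))
        - (ϱ / N) * ∑ k, D k
        - (Γ / N) * Finset.univ.sup' hne (fun k => D k / Rdown k) := by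
  set L := B * Real.logb 2 (1 + h1 * P / (σ2 * B))
  have hL : 0 < L := Real.mul_logb_one_add_pos hB (by positivity)
  have hTup : Dmod / univ.inf' hne Rup ≤ Tup :=
    div_inf'_le_of_le_mul hne (fun k _ => hRup k) (fun k _ => hup k)
  have hTbr : Dmod / L ≤ Tbr := (div_le_iff₀ hL).2 hbr
  have hTdown : Γ * univ.sup' hne (fun k => D k / Rdown k) ≤ Tdown :=
    mul_sup'_div_le_of_mul_le_mul hne (fun k _ => hRdown k) (fun k _ => hdown k)
  have hbudget : Tloc + Dmod / L + Dmod / univ.inf' hne Rup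
      ≤ (Tmax - ϱ * ∑ k, D k - Γ * univ.sup' hne (fun k => D k / Rdown k)) / N := by
    rw [le_div_iff₀ hN]
    linarith [mul_le_mul_of_nonneg_left hTup hN.le, mul_le_mul_of_nonneg_left hTbr hN.le]
  calc Tloc ≤ (Tmax - ϱ * ∑ k, D k - Γ * univ.sup' hne (fun k => D k / Rdown k)) / N
        - Dmod / univ.inf' hne Rup - Dmod / L := by linarith
    _ = _ := by ring

/-- Optimality part of Theorem 1: any feasible time allocation has local
training time at most the closed-form value
`T_max/N − D_mod/min_k R_k^up − D_mod/(B·log₂(1 + h₁P/(σ²B)))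
 − (ϱ/N)·Σ_k D_k − (Γ/N)·max_k (D_k/R_k^down)`. -/
theorem stmt_5
    (K : ℕ) (hK : 1 ≤ K)
    (Γ N ϱ B σ2 P h1 Dmod Tmax : ℝ)
    (hΓ : 0 < Γ) (hN : 0 < N) (hϱ : 0 < ϱ) (hB : 0 < B) (hσ2 : 0 < σ2)
    (hP : 0 < P) (hh1 : 0 < h1) (hDmod : 0 < Dmod) (hTmax : 0 < Tmax)
    (Rdown Rup D : Fin K → ℝ)
    (hRdown : ∀ k, 0 < Rdown k) (hRup : ∀ k, 0 < Rup k) (hD : ∀ k, 0 ≤ D k)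
    (hne : (Finset.univ : Finset (Fin K)).Nonempty)
    (Tdown Tbr Tloc Tup : ℝ)
    (hTdown0 : 0 ≤ Tdown) (hTbr0 : 0 ≤ Tbr) (hTloc0 : 0 ≤ Tloc) (hTup0 : 0 ≤ Tup)
    (hlatency : ϱ * (∑ k, D k) + Tdown + N * (Tbr + Tloc + Tup) ≤ Tmax)
    (hdown : ∀ k, Tdown * Rdown k ≥ Γ * D k)
    (hbr : Tbr * (B * Real.logb 2 (1 + h1 * P / (σ2 * B))) ≥ Dmod)
    (hup : ∀ k, Tup * Rup k ≥ Dmod) :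
    Tloc ≤ Tmax / N - Dmod / Finset.univ.inf' hne Rup
        - Dmod / (B * Real.logb 2 (1 + h1 * P / (σ2 * B)))
        - (ϱ / N) * ∑ k, D k
        - (Γ / N) * Finset.univ.sup' hne (fun k => D k / Rdown k) :=
  stmt_5_general K Γ N ϱ B σ2 P h1 Dmod Tmax hN hB hσ2 hP hh1 Rdown Rup D hRdown hRup hne Tdown Tbr
    Tloc Tup hlatency hdown hbr hup
end

section
/- Consider downlink NOMA with K ≥ 1 devices: B > 0, σ² > 0, channel gains h_k > 0, powers p = (p_1,…,p_K) with p_k ≥ 0, and rates R_k(p) = B·log₂(1 + h_k·p_k/(σ²·B + h_k·Σ_{j>k} p_j)). Let η ≥ 0 and D_k ≥ 0 for all k. Suppose p satisfies R_k(p) ≥ η·D_k for all k, with strict inequality R_{k̂}(p) > η·D_{k̂} at some index k̂. Define p̃ by p̃_k = p_k for k ≠ k̂ and p̃_{k̂} = (2^{η·D_{k̂}/B} − 1)·(σ²·B/h_{k̂} + Σ_{j>k̂} p_j). Then 0 ≤ p̃_{k̂} < p_{k̂}; R_{k̂}(p̃) = η·D_{k̂}; R_k(p̃) ≥ R_k(p)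 ≥ η·D_k for every k < k̂; R_k(p̃) = R_k(p) for every k > k̂; and Σ_k p̃_k < Σ_k p_k. (Core of Lemma 6: the optimal downlink power allocation satisfies all rate constraints with equality.) -/
open Finset in
/-- Core of Lemma 6: in downlink NOMA, if all rate constraints `R_k(p) ≥ η·D_k`
hold and that of device `k̂` is strictly slack, then lowering `p_{k̂}` to
`(2^{ηD_{k̂}/B} − 1)(σ²B/h_{k̂} + Σ_{j>k̂} p_j)` makes the constraint of `k̂`
tight, does not decrease the rates of earlier devices, leaves the rates of
later devices unchanged, and strictly decreases the total power. -/
theorem stmt_9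
    (K : ℕ) (B σ2 : ℝ) (hB : 0 < B) (hσ2 : 0 < σ2)
    (h : Fin K → ℝ) (hh : ∀ k, 0 < h k)
    (p : Fin K → ℝ) (hp : ∀ k, 0 ≤ p k)
    (η : ℝ) (hη : 0 ≤ η)
    (D : Fin K → ℝ) (hD : ∀ k, 0 ≤ D k)
    (R : (Fin K → ℝ) → Fin K → ℝ)
    (hR : ∀ q k, R q k = B * Real.logb 2
      (1 + h k * q k / (σ2 * B + h k * ∑ j ∈ univ.filter (fun j => k < j), q j)))
    (khat : Fin K)
    (hfeas : ∀ k, R p k ≥ η * D k)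
    (hslack : R p khat > η * D khat)
    (ptilde : Fin K → ℝ)
    (hptilde : ∀ k, ptilde k = if k = khat then
        ((2 : ℝ) ^ (η * D khat / B) - 1) *
          (σ2 * B / h khat + ∑ j ∈ univ.filter (fun j => khat < j), p j)
      else p k) :
    0 ≤ ptilde khat ∧ ptilde khat < p khat ∧
    R ptilde khat = η * D khat ∧
    (∀ k, k < khat → R ptilde k ≥ R p k) ∧
    (∀ k, khat < k → R ptilde k = R p k) ∧
    (∑ k, ptilde k) < ∑ k, p k := by
  have hhk := hh khat
  set T := ∑ j ∈ univ.filter (fun j => khat < j), p j with hT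
  have hT0 : 0 ≤ T := Finset.sum_nonneg (fun j _ => hp j)
  set S := σ2 * B / h khat + T with hS
  have hS0 : 0 < S := by
    rw [hS]
    have h1 : 0 < σ2 * B / h khat := by positivity
    linarith
  set t := η * D khat / B with ht
  have ht0 : 0 ≤ t := by
    rw [ht]; exact div_nonneg (mul_nonneg hη (hD khat)) hB.le
  have hBt : B * t = η * D khat := by
    rw [ht]; field_simp
  have hden : σ2 * B + h khat * T = h khat * S := by
    rw [hS]; field_simp
  have hratio : h khat * p khat / (σ2 * B + h khat * T) = p khat / S := by
    rw [hden, mul_div_mul_left _ _ (ne_of_gt hhk)]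
  have hpos1 : (0:ℝ) < 1 + p khat / S := by
    have h1 := div_nonneg (hp khat) hS0.le
    linarith
  have hslack' : t < Real.logb 2 (1 + p khat / S) := by
    have h1 : B * t < B * Real.logb 2 (1 + p khat / S) := by
      rw [hBt]
      have := hslack
      rwa [hR, hratio] at this
    exact (mul_lt_mul_iff_right₀ hB).mp h1
  have hkey : (2:ℝ) ^ t < 1 + p khat / S := by
    calc (2:ℝ) ^ t < 2 ^ Real.logb 2 (1 + p khat / S) :=
          Real.rpow_lt_rpow_of_exponent_lt one_lt_two hslack'
      _ = 1 + p khat / S := Real.rpow_logb two_pos (by norm_num) hpos1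
  have h2t1 : (1:ℝ) ≤ 2 ^ t := by
    calc (1:ℝ) = 2 ^ (0:ℝ) := (Real.rpow_zero 2).symm
      _ ≤ 2 ^ t := Real.rpow_le_rpow_of_exponent_le one_le_two ht0
  have hpt : ptilde khat = ((2:ℝ) ^ t - 1) * S := by
    rw [hptilde, if_pos rfl]
  have hpt0 : 0 ≤ ptilde khat := by
    rw [hpt]; exact mul_nonneg (by linarith) hS0.le
  have hptlt : ptilde khat < p khat := by
    rw [hpt]
    have h1 : (2:ℝ) ^ t - 1 < p khat / S := by linarith
    calc ((2:ℝ) ^ t - 1) * S < (p khat / S) * S := mul_lt_mul_of_pos_right h1 hS0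
      _ = p khat := div_mul_cancel₀ _ hS0.ne'
  have hptle : ∀ j, ptilde j ≤ p j := by
    intro j
    by_cases hj : j = khat
    · subst hj; exact hptlt.le
    · rw [hptilde, if_neg hj]
  have hpt0' : ∀ j, 0 ≤ ptilde j := by
    intro j
    by_cases hj : j = khat
    · subst hj; exact hpt0
    · rw [hptilde, if_neg hj]; exact hp j
  have hsum_eq : ∀ k : Fin K, khat ≤ k →
      ∑ j ∈ univ.filter (fun j => k < j), ptilde j
        = ∑ j ∈ univ.filter (fun j => k < j), p j := by
    intro k hk
    refine Finset.sum_congr rfl (fun j hj => ?_)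
    simp only [Finset.mem_filter] at hj
    rw [hptilde, if_neg]
    intro hjk
    exact absurd (lt_of_le_of_lt hk hj.2) (by rw [hjk]; exact lt_irrefl khat)
  have hRt : R ptilde khat = η * D khat := by
    rw [hR, hsum_eq khat le_rfl, ← hT, hden, hpt]
    have h1 : h khat * (((2:ℝ) ^ t - 1) * S) / (h khat * S) = (2:ℝ) ^ t - 1 := by
      field_simp
    rw [h1]
    have h2 : 1 + ((2:ℝ) ^ t - 1) = (2:ℝ) ^ t := by ring
    rw [h2, Real.logb_rpow two_pos (by norm_num), hBt]
  refine ⟨hpt0, hptlt, hRt, ?_, ?_, ?_⟩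
  · intro k hk
    rw [hR, hR]
    have hpk : ptilde k = p k := by
      rw [hptilde, if_neg (ne_of_lt hk)]
    rw [hpk]
    set A := ∑ j ∈ univ.filter (fun j => k < j), ptilde j with hA
    set A' := ∑ j ∈ univ.filter (fun j => k < j), p j with hA'
    have hA0 : 0 ≤ A := Finset.sum_nonneg (fun j _ => hpt0' j)
    have hAle : A ≤ A' := Finset.sum_le_sum (fun j _ => hptle j)
    have hd1 : 0 < σ2 * B + h k * A := by
      have h1 : 0 ≤ h k * A := mul_nonneg (hh k).le hA0
      have h2 : 0 < σ2 * B := by positivity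
      linarith
    have hd2 : σ2 * B + h k * A ≤ σ2 * B + h k * A' := by
      have := (hh k).le; nlinarith
    have hfrac : h k * p k / (σ2 * B + h k * A') ≤ h k * p k / (σ2 * B + h k * A) :=
      div_le_div_of_nonneg_left (mul_nonneg (hh k).le (hp k)) hd1 hd2
    have hx : (0:ℝ) < 1 + h k * p k / (σ2 * B + h k * A') := by
      have h1 := div_nonneg (mul_nonneg (hh k).le (hp k)) (le_trans hd1.le hd2)
      linarith
    apply mul_le_mul_of_nonneg_left _ hB.le
    exact (Real.logb_le_logb one_lt_two hx (by linarith)).mpr (by linarith)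
  · intro k hk
    rw [hR, hR, hsum_eq k hk.le, hptilde, if_neg (ne_of_gt hk)]
  · exact Finset.sum_lt_sum (fun i _ => hptle i)
      ⟨khat, Finset.mem_univ _, hptlt⟩
end

section
/- Consider downlink NOMA with K ≥ 1 devices: B > 0, σ² > 0, channel gains h_k > 0, and D_k > 0 for all k. For η ≥ 0 define p_k(η) by the backward recursion p_k(η) = (2^{η·D_k/B} − 1)·(σ²·B/h_k + Σ_{j>k} p_j(η)). Then for every k the function η ↦ p_k(η) is strictly increasing on [0, ∞); consequently η ↦ Σ_{k=1}^K p_k(η) is strictly increasing, so for any power budget P > 0 the set {η ≥ 0 : Σ_k p_k(η) ≤ P} is an interval [0, η*] on which the constraint is monotone (justifying the bisection search for the optimal η in Algorithm 2). -/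
open Finset in
/-- Each recursively-defined downlink power `p_k(η)` is strictly increasing in
`η ≥ 0`, hence so is the total power `Σ_k p_k(η)`; consequently, for any power
budget `P` the feasibility of the budget constraint is monotone in `η`: if a
larger `η` satisfies the budget, so does any smaller nonnegative `η`
(justifying the bisection search of Algorithm 2). -/
theorem stmt_11
    (K : ℕ) (hK : 1 ≤ K)
    (B σ2 : ℝ) (hB : 0 < B) (hσ2 : 0 < σ2)
    (h : Fin K → ℝ) (hh : ∀ k, 0 < h k)
    (D : Fin K → ℝ) (hD : ∀ k, 0 < D k)
    (P : ℝ) (hP : 0 < P) :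
    ∀ η₁ η₂ : ℝ, 0 ≤ η₁ → η₁ < η₂ →
    ∀ p₁ p₂ : Fin K → ℝ,
    (∀ k, p₁ k = ((2 : ℝ) ^ (η₁ * D k / B) - 1) *
      (σ2 * B / h k + ∑ j ∈ univ.filter (fun j => k < j), p₁ j)) →
    (∀ k, p₂ k = ((2 : ℝ) ^ (η₂ * D k / B) - 1) *
      (σ2 * B / h k + ∑ j ∈ univ.filter (fun j => k < j), p₂ j)) →
    (∀ k, p₁ k < p₂ k) ∧
    (∑ k, p₁ k) < (∑ k, p₂ k) ∧
    ((∑ k, p₂ k) ≤ P → (∑ k, p₁ k) ≤ P) := by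
  intro η₁ η₂ hη₁ hη hp hq hp1 hp2
  have key : ∀ n, ∀ k : Fin K, K - k.val = n → 0 ≤ hp k ∧ hp k < hq k := by
    intro n
    induction n using Nat.strong_induction_on with
    | _ n ih =>
      intro k hkn
      have hsum : ∀ j ∈ univ.filter (fun j => k < j), 0 ≤ hp j ∧ hp j < hq j := by
        intro j hj
        have hj' : k < j := (mem_filter.mp hj).2
        exact ih (K - j.val) (by omega) j rfl
      have hS1 : 0 ≤ ∑ j ∈ univ.filter (fun j => k < j), hp j :=
        Finset.sum_nonneg fun j hj => (hsum j hj).1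
      have hS12 : (∑ j ∈ univ.filter (fun j => k < j), hp j)
          ≤ ∑ j ∈ univ.filter (fun j => k < j), hq j :=
        Finset.sum_le_sum fun j hj => le_of_lt (hsum j hj).2
      have hc : 0 < σ2 * B / h k := div_pos (mul_pos hσ2 hB) (hh k)
      have he1 : 0 ≤ η₁ * D k / B := div_nonneg (mul_nonneg hη₁ (hD k).le) hB.le
      have he12 : η₁ * D k / B < η₂ * D k / B := by
        have := hD k
        gcongr
      have ha1 : 0 ≤ (2 : ℝ) ^ (η₁ * D k / B) - 1 := by
        have : (1 : ℝ) ≤ (2 : ℝ) ^ (η₁ * D k / B) :=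
          Real.one_le_rpow (by norm_num) he1
        linarith
      have ha12 : (2 : ℝ) ^ (η₁ * D k / B) - 1 < (2 : ℝ) ^ (η₂ * D k / B) - 1 := by
        have : (2 : ℝ) ^ (η₁ * D k / B) < (2 : ℝ) ^ (η₂ * D k / B) :=
          (Real.rpow_lt_rpow_left_iff (by norm_num : (1:ℝ) < 2)).mpr he12
        linarith
      constructor
      · rw [hp1 k]; positivity
      · rw [hp1 k, hp2 k]
        calc ((2 : ℝ) ^ (η₁ * D k / B) - 1) *
              (σ2 * B / h k + ∑ j ∈ univ.filter (fun j => k < j), hp j)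
            ≤ ((2 : ℝ) ^ (η₁ * D k / B) - 1) *
              (σ2 * B / h k + ∑ j ∈ univ.filter (fun j => k < j), hq j) := by
              apply mul_le_mul_of_nonneg_left _ ha1
              linarith
          _ < ((2 : ℝ) ^ (η₂ * D k / B) - 1) *
              (σ2 * B / h k + ∑ j ∈ univ.filter (fun j => k < j), hq j) := by
              apply mul_lt_mul_of_pos_right ha12
              linarith
  have hlt : ∀ k, hp k < hq k := fun k => (key (K - k.val) k rfl).2
  have hne : (univ : Finset (Fin K)).Nonempty := by
    haveI : NeZero K := ⟨by omega⟩
    exact univ_nonempty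
  have hsumlt : (∑ k, hp k) < (∑ k, hq k) :=
    Finset.sum_lt_sum_of_nonempty hne fun k _ => hlt k
  exact ⟨hlt, hsumlt, fun hle => le_trans (le_of_lt hsumlt) hle⟩
end

section
/- Let B > 0, σ² > 0, I > 0, I' ≥ 0, and let g_â·q_â^max and g_ṽ·q_ṽ^max be positive reals with g_â·q_â^max < g_ṽ·q_ṽ^max. Suppose θ ≥ 0 satisfies the feasibility constraints obtained when device â is decoded first: θ ≤ (B/2)·log₂(1 + I/(σ²·B + I')) and g_â·q_â^max ≥ (2^{θ/B} − 1)·(σ²·B + I')·2^{θ/B}. Then θ also satisfies the feasibility constraints obtained when device ṽ is decoded first: θ ≤ (B/2)·log₂(1 + I/(σ²·B + I')), g_â·q_â^max ≥ (2^{θ/B} − 1)·(σ²·B + I'), and g_ṽ·q_ṽ^max ≥ (2^{θ/B} − 1)·(σ²·B + I')·2^{θ/B}. Hence the maximum feasible common rate θ when the device with larger g·q^max is decoded first is at least as large as when it is decoded second. (Core two-user exchange argument of Theorem 3: the optimal SIC decoding order is in descending order of g_k·q_k^max.) -/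
/-- Core two-user exchange argument of Theorem 3: with
`g_â·q_â^max < g_ṽ·q_ṽ^max`, any common rate `θ` feasible when device `â`
(the weaker one) is decoded first is also feasible when device `ṽ` is decoded
first; hence decoding in descending order of `g·q^max` is optimal. -/
theorem stmt_12
    (B σ2 I I' gqa gqv θ : ℝ)
    (hB : 0 < B) (hσ2 : 0 < σ2) (hI : 0 < I) (hI' : 0 ≤ I')
    (hgqa : 0 < gqa) (hgqv : 0 < gqv) (hlt : gqa < gqv)
    (hθ : 0 ≤ θ)
    (hcap : θ ≤ (B / 2) * Real.logb 2 (1 + I / (σ2 * B + I')))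
    (hfirst : gqa ≥ ((2 : ℝ) ^ (θ / B) - 1) * (σ2 * B + I') * (2 : ℝ) ^ (θ / B)) :
    θ ≤ (B / 2) * Real.logb 2 (1 + I / (σ2 * B + I')) ∧
    gqa ≥ ((2 : ℝ) ^ (θ / B) - 1) * (σ2 * B + I') ∧
    gqv ≥ ((2 : ℝ) ^ (θ / B) - 1) * (σ2 * B + I') * (2 : ℝ) ^ (θ / B) := by
  have hx : (1 : ℝ) ≤ (2 : ℝ) ^ (θ / B) :=
    Real.one_le_rpow one_le_two (div_nonneg hθ hB.le)
  have hnn : 0 ≤ ((2 : ℝ) ^ (θ / B) - 1) * (σ2 * B + I') := by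
    have : 0 ≤ σ2 * B + I' := by positivity
    exact mul_nonneg (by linarith) this
  refine ⟨hcap, ?_, le_of_lt (lt_of_le_of_lt hfirst hlt)⟩
  calc ((2 : ℝ) ^ (θ / B) - 1) * (σ2 * B + I')
      = ((2 : ℝ) ^ (θ / B) - 1) * (σ2 * B + I') * 1 := by ring
    _ ≤ ((2 : ℝ) ^ (θ / B) - 1) * (σ2 * B + I') * (2 : ℝ) ^ (θ / B) :=
        mul_le_mul_of_nonneg_left hx hnn
    _ ≤ gqa := hfirst
end

section
/- Consider uplink NOMA with K ≥ 1 devices: B > 0, σ² > 0, for each k let g_k > 0, q_k^max > 0, and let π be a permutation of {1,…,K} giving the SIC decoding order. For normalized powers q' ∈ [0,1]^K, device k achieves rate R_k(q') = B·log₂(1 + g_k·q_k^max·q'_k/(σ²·B + Σ_{j : π_j > π_k} g_j·q_j^max·q'_j)). Let θ ≥ 0 and suppose q' ∈ [0,1]^K satisfies R_k(q') ≥ θ for all k with strict inequality R_{k̂}(q') > θ at some index k̂. Define q̃' by q̃'_k = q'_k for k ≠ k̂ and q̃'_{k̂} = (2^{θ/B} − 1)·(σ²·B + Σ_{j : π_j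 > π_{k̂}} g_j·q_j^max·q'_j)/(g_{k̂}·q_{k̂}^max). Then 0 ≤ q̃'_{k̂} < q'_{k̂} (so q̃' ∈ [0,1]^K), R_{k̂}(q̃') = θ, R_k(q̃') ≥ R_k(q') ≥ θ for every k with π_k < π_{k̂}, and R_k(q̃') = R_k(q') for every k with π_k > π_{k̂}. (Core of Lemma 7: a feasible solution can be modified so that every rate constraint holds with equality.) -/
/-!
Lowering the power of device `k̂` only changes the interference seen by devices decoded
before it, and only downwards, so their rates can only grow; the devices decoded after `k̂`
see the same signals as before. The new power of `k̂` is chosen by inverting the Shannon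
formula `θ = B log₂ (1 + SINR)`, so its rate becomes exactly `θ`, and it is smaller than the
old power precisely because the old rate exceeded `θ`.
-/

open Finset Function

section ShannonRate

open Real

variable {B θ : ℝ}

theorem lt_mul_logb_one_add_iff (hB : 0 < B) {s : ℝ} (hs : 0 ≤ s) :
    θ < B * logb 2 (1 + s) ↔ (2 : ℝ) ^ (θ / B) - 1 < s := by
  rw [← div_lt_iff₀' hB, lt_logb_iff_rpow_lt one_lt_two (by linarith)]
  constructor <;> intro h <;> linarith

theorem mul_logb_one_add_rpow_sub_one (hB : B ≠ 0) :
    B * logb 2 (1 + ((2 : ℝ) ^ (θ / B) - 1)) = θ := by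
  rw [add_sub_cancel, logb_rpow two_pos (by norm_num), mul_div_cancel₀ θ hB]

theorem mul_logb_one_add_div_le_of_le (hB : 0 ≤ B) {N I I' : ℝ} (hN : 0 ≤ N) (hI : 0 < I)
    (hII' : I ≤ I') : B * logb 2 (1 + N / I') ≤ B * logb 2 (1 + N / I) := by
  have hpos : 0 < 1 + N / I' := by have := hI.trans_le hII'; positivity
  gcongr
  exact one_lt_two

end ShannonRate

section Interference

variable {ι : Type*} (w q : ι → ℝ) {s : Finset ι}

theorem add_sum_mul_pos {N : ℝ} (hN : 0 < N) (hw : ∀ j, 0 ≤ w j) (hq : ∀ j, 0 ≤ q j) :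
    0 < N + ∑ j ∈ s, w j * q j :=
  add_pos_of_pos_of_nonneg hN (sum_nonneg fun j _ => mul_nonneg (hw j) (hq j))

variable [DecidableEq ι] {i : ι} {v : ℝ}

theorem update_mem_Icc {a b : ℝ} (hq : ∀ j, q j ∈ Set.Icc a b) (hv : v ∈ Set.Icc a b) :
    ∀ j, update q i v j ∈ Set.Icc a b :=
  (forall_update_iff q fun _ x => x ∈ Set.Icc a b).2 ⟨hv, fun j _ => hq j⟩

theorem sum_mul_update_of_notMem (hi : i ∉ s) :
    ∑ j ∈ s, w j * update q i v j = ∑ j ∈ s, w j * q j :=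
  sum_congr rfl fun j hj => by rw [update_of_ne (ne_of_mem_of_not_mem hj hi)]

theorem sum_mul_update_le (hw : ∀ j, 0 ≤ w j) (hv : v ≤ q i) :
    ∑ j ∈ s, w j * update q i v j ≤ ∑ j ∈ s, w j * q j :=
  sum_le_sum fun j _ => mul_le_mul_of_nonneg_left (update_le_self_iff.2 hv j) (hw j)

end Interference

theorem stmt_14_general
    (K : ℕ)
    (B σ2 : ℝ) (hB : 0 < B) (hσ2 : 0 < σ2)
    (g qmax : Fin K → ℝ) (hg : ∀ k, 0 < g k) (hqmax : ∀ k, 0 < qmax k)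
    (π : Equiv.Perm (Fin K))
    (R : (Fin K → ℝ) → Fin K → ℝ)
    (hR : ∀ q k, R q k = B * Real.logb 2
      (1 + g k * qmax k * q k /
        (σ2 * B + ∑ j ∈ univ.filter (fun j => π k < π j), g j * qmax j * q j)))
    (θ : ℝ) (hθ : 0 ≤ θ)
    (q' : Fin K → ℝ) (hq'0 : ∀ k, 0 ≤ q' k) (hq'1 : ∀ k, q' k ≤ 1)
    (khat : Fin K)
    (hslack : R q' khat > θ)
    (qtilde : Fin K → ℝ)
    (hqtilde : ∀ k, qtilde k = if k = khat then
        ((2 : ℝ) ^ (θ / B) - 1) *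
          (σ2 * B + ∑ j ∈ univ.filter (fun j => π khat < π j), g j * qmax j * q' j)
          / (g khat * qmax khat)
      else q' k) :
    0 ≤ qtilde khat ∧ qtilde khat < q' khat ∧
    (∀ k, 0 ≤ qtilde k ∧ qtilde k ≤ 1) ∧
    R qtilde khat = θ ∧
    (∀ k, π k < π khat → R qtilde k ≥ R q' k) ∧
    (∀ k, π khat < π k → R qtilde k = R q' k) := by
  rw [gt_iff_lt, hR] at hslack
  set c := (2 : ℝ) ^ (θ / B) - 1
  set D := σ2 * B + ∑ j ∈ univ.filter (fun j => π khat < π j), g j * qmax j * q' j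
  set gq := g khat * qmax khat
  have hw : ∀ j, 0 ≤ g j * qmax j := fun j => (mul_pos (hg j) (hqmax j)).le
  have hgq : 0 < gq := mul_pos (hg khat) (hqmax khat)
  have hD : 0 < D := add_sum_mul_pos _ _ (mul_pos hσ2 hB) hw hq'0
  have hc : 0 ≤ c := sub_nonneg.2 (Real.one_le_rpow one_le_two (div_nonneg hθ hB.le))
  have hqtilde_eq : qtilde = update q' khat (c * D / gq) :=
    funext fun k => by rw [hqtilde, update_apply]
  subst hqtilde_eq
  have hkhat : khat ∉ univ.filter (fun j => π khat < π j) := by simp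
  have hlt : c * D / gq < q' khat := by
    rw [lt_mul_logb_one_add_iff hB (div_nonneg (mul_nonneg hgq.le (hq'0 khat)) hD.le),
      lt_div_iff₀ hD] at hslack
    rwa [div_lt_iff₀ hgq, mul_comm _ gq]
  have hnonneg : 0 ≤ c * D / gq := by positivity
  have hbounds := update_mem_Icc q' (i := khat) (fun k => ⟨hq'0 k, hq'1 k⟩)
    ⟨hnonneg, hlt.le.trans (hq'1 khat)⟩
  refine ⟨by rwa [update_self], by rwa [update_self], hbounds, ?_, fun k hk => ?_, fun k hk => ?_⟩
  · rw [hR, update_self, sum_mul_update_of_notMem _ _ hkhat, mul_div_cancel₀ _ hgq.ne',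
      mul_div_cancel_right₀ _ hD.ne', mul_logb_one_add_rpow_sub_one hB.ne']
  · rw [hR, hR, update_of_ne (ne_of_apply_ne π hk.ne)]
    exact mul_logb_one_add_div_le_of_le hB.le (mul_nonneg (hw k) (hq'0 k))
      (add_sum_mul_pos _ _ (mul_pos hσ2 hB) hw fun j => (hbounds j).1)
      (add_le_add le_rfl (sum_mul_update_le _ _ hw hlt.le))
  · have hk' : khat ∉ univ.filter (fun j => π k < π j) := by simpa using hk.le
    rw [hR, hR, update_of_ne (ne_of_apply_ne π hk.ne'), sum_mul_update_of_notMem _ _ hk']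

open Finset in
/-- Core of Lemma 7: in uplink NOMA with SIC decoding order `π`, if all rate
constraints `R_k(q') ≥ θ` hold and that of device `k̂` is strictly slack, then
lowering `q'_{k̂}` to `(2^{θ/B} − 1)(σ²B + Σ_{π_j > π_{k̂}} g_j q_j^max q'_j)
/ (g_{k̂} q_{k̂}^max)` keeps the normalized power in `[0,1)`, makes the
constraint of `k̂` tight, does not decrease earlier-decoded devices' rates, and
leaves later-decoded devices' rates unchanged. -/
theorem stmt_14
    (K : ℕ) (hK : 1 ≤ K)
    (B σ2 : ℝ) (hB : 0 < B) (hσ2 : 0 < σ2)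
    (g qmax : Fin K → ℝ) (hg : ∀ k, 0 < g k) (hqmax : ∀ k, 0 < qmax k)
    (π : Equiv.Perm (Fin K))
    (R : (Fin K → ℝ) → Fin K → ℝ)
    (hR : ∀ q k, R q k = B * Real.logb 2
      (1 + g k * qmax k * q k /
        (σ2 * B + ∑ j ∈ univ.filter (fun j => π k < π j), g j * qmax j * q j)))
    (θ : ℝ) (hθ : 0 ≤ θ)
    (q' : Fin K → ℝ) (hq'0 : ∀ k, 0 ≤ q' k) (hq'1 : ∀ k, q' k ≤ 1)
    (khat : Fin K)
    (hfeas : ∀ k, R q' k ≥ θ)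
    (hslack : R q' khat > θ)
    (qtilde : Fin K → ℝ)
    (hqtilde : ∀ k, qtilde k = if k = khat then
        ((2 : ℝ) ^ (θ / B) - 1) *
          (σ2 * B + ∑ j ∈ univ.filter (fun j => π khat < π j), g j * qmax j * q' j)
          / (g khat * qmax khat)
      else q' k) :
    0 ≤ qtilde khat ∧ qtilde khat < q' khat ∧
    (∀ k, 0 ≤ qtilde k ∧ qtilde k ≤ 1) ∧
    R qtilde khat = θ ∧
    (∀ k, π k < π khat → R qtilde k ≥ R q' k) ∧
    (∀ k, π khat < π k → R qtilde k = R q' k) :=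
  stmt_14_general K B σ2 hB hσ2 g qmax hg hqmax π R hR θ hθ q' hq'0 hq'1 khat hslack qtilde hqtilde
end

section
/- Consider uplink NOMA with K ≥ 1 devices: B > 0, σ² > 0, g_k > 0 and q_k^max > 0 for all k, and a fixed permutation π giving the SIC decoding order. For θ ≥ 0 define q'_k(θ) by the backward recursion q'_k(θ) = (2^{θ/B} − 1)·(σ²·B + Σ_{j : π_j > π_k} g_j·q_j^max·q'_j(θ))/(g_k·q_k^max). Then for every k the function θ ↦ q'_k(θ) is strictly increasing on [0, ∞) with q'_k(0) = 0; consequently, for each k the set {θ ≥ 0 : q'_k(θ) ≤ 1} is an interval containing 0, so the feasibility condition q'(θ) ∈ [0,1]^K is monotone in θ (justifying the bisection search for the optimal θ in Algorithm 3). -/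
/-!
The factor `c(θ) = 2^(θ/B) - 1` vanishes at `0` and is nonnegative and strictly increasing on
`[0, ∞)`. Since `q'_k` depends only on the `q'_j` decoded after `k`, induction along the decoding
order shows that the interference `∑_{π_j > π_k} g_j q_j^max q'_j` is nonnegative and nondecreasing
in `θ`; then `q'_k = c(θ) · (σ²B + interference) / (g_k q_k^max)` is a strictly increasing
nonnegative factor times a positive nondecreasing one.
-/

open Finset

theorem Finite.induction_comp_gt {ι α : Type*} [Finite ι] [Preorder α] (f : ι → α) {P : ι → Prop}
    (h : ∀ k, (∀ j, f k < f j → P j) → P k) (k : ι) : P k := by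
  have : IsTrans ι (fun j k => f k < f j) := ⟨fun _ _ _ h₁ h₂ => h₂.trans h₁⟩
  have : Std.Irrefl (fun j k : ι => f k < f j) := ⟨fun _ => lt_irrefl _⟩
  exact (Finite.wellFounded_of_trans_of_irrefl _).induction k h

section PowerRecursion

variable {ι α : Type*} [Fintype ι] [LinearOrder α]

def interference (f : ι → α) (w q : ι → ℝ) (k : ι) : ℝ :=
  ∑ j ∈ univ.filter (fun j => f k < f j), w j * q j

/-- The recursion of Theorem 4, with `c = 2^(θ/B) - 1`, `N = σ²B`, `w k = g_k q_k^max` and `f = π`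
the decoding order. -/
def IsPowerRecursion (f : ι → α) (w : ι → ℝ) (N c : ℝ) (q : ι → ℝ) : Prop :=
  ∀ k, q k = c * (N + interference f w q k) / w k

variable {f : ι → α} {w q q₁ q₂ : ι → ℝ} {N c c₁ c₂ : ℝ}

theorem interference_nonneg (hw : ∀ k, 0 < w k) (k : ι) (hq : ∀ j, f k < f j → 0 ≤ q j) :
    0 ≤ interference f w q k :=
  sum_nonneg fun j hj => mul_nonneg (hw j).le (hq j (mem_filter.1 hj).2)

theorem interference_mono (hw : ∀ k, 0 < w k) (k : ι) (hq : ∀ j, f k < f j → q₁ j ≤ q₂ j) :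
    interference f w q₁ k ≤ interference f w q₂ k :=
  sum_le_sum fun j hj => mul_le_mul_of_nonneg_left (hq j (mem_filter.1 hj).2) (hw j).le

theorem IsPowerRecursion.nonneg (hq : IsPowerRecursion f w N c q) (hw : ∀ k, 0 < w k)
    (hN : 0 ≤ N) (hc : 0 ≤ c) (k : ι) : 0 ≤ q k := by
  induction k using Finite.induction_comp_gt f with
  | h k ih =>
    rw [hq k]
    have := interference_nonneg hw k ih
    have := hw k
    positivity

theorem IsPowerRecursion.eq_zero (hq : IsPowerRecursion f w N c q) (hc : c = 0) (k : ι) :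
    q k = 0 := by
  simpa [hc] using hq k

theorem IsPowerRecursion.mono (hq₁ : IsPowerRecursion f w N c₁ q₁)
    (hq₂ : IsPowerRecursion f w N c₂ q₂) (hw : ∀ k, 0 < w k) (hN : 0 ≤ N) (hc₁ : 0 ≤ c₁)
    (hc : c₁ ≤ c₂) (k : ι) : q₁ k ≤ q₂ k := by
  induction k using Finite.induction_comp_gt f with
  | h k ih =>
    rw [hq₁ k, hq₂ k]
    refine div_le_div_of_nonneg_right (mul_le_mul hc ?_ ?_ (hc₁.trans hc)) (hw k).le
    · exact add_le_add_right (interference_mono hw k ih) N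
    · linarith [interference_nonneg (f := f) hw k fun j _ => hq₁.nonneg hw hN hc₁ j]

theorem IsPowerRecursion.strictMono (hq₁ : IsPowerRecursion f w N c₁ q₁)
    (hq₂ : IsPowerRecursion f w N c₂ q₂) (hw : ∀ k, 0 < w k) (hN : 0 < N) (hc₁ : 0 ≤ c₁)
    (hc : c₁ < c₂) (k : ι) : q₁ k < q₂ k := by
  have hle : ∀ j, q₁ j ≤ q₂ j := hq₁.mono hq₂ hw hN.le hc₁ hc.le
  have hS₂ : 0 < N + interference f w q₂ k :=
    add_pos_of_pos_of_nonneg hN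
      (interference_nonneg hw k fun j _ => hq₂.nonneg hw hN.le (hc₁.trans hc.le) j)
  rw [hq₁ k, hq₂ k]
  refine div_lt_div_of_pos_right ?_ (hw k)
  calc c₁ * (N + interference f w q₁ k)
      ≤ c₁ * (N + interference f w q₂ k) := by
        gcongr
        exact interference_mono hw k fun j _ => hle j
    _ < c₂ * (N + interference f w q₂ k) := by gcongr

end PowerRecursion

theorem two_rpow_div_sub_one_nonneg {B θ : ℝ} (hB : 0 < B) (hθ : 0 ≤ θ) :
    0 ≤ (2 : ℝ) ^ (θ / B) - 1 :=
  sub_nonneg.2 (Real.one_le_rpow one_le_two (div_nonneg hθ hB.le))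

theorem two_rpow_div_strictMono {B : ℝ} (hB : 0 < B) : StrictMono fun θ : ℝ => (2 : ℝ) ^ (θ / B) :=
  fun _ _ h => Real.rpow_lt_rpow_of_exponent_lt one_lt_two (div_lt_div_of_pos_right h hB)

open Finset in
theorem stmt_16_general
    (K : ℕ)
    (B σ2 : ℝ) (hB : 0 < B) (hσ2 : 0 < σ2)
    (g qmax : Fin K → ℝ) (hg : ∀ k, 0 < g k) (hqmax : ∀ k, 0 < qmax k)
    (π : Equiv.Perm (Fin K)) :
    (∀ θ₁ θ₂ : ℝ, 0 ≤ θ₁ → θ₁ < θ₂ →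
      ∀ q₁ q₂ : Fin K → ℝ,
      (∀ k, q₁ k = ((2 : ℝ) ^ (θ₁ / B) - 1) *
        (σ2 * B + ∑ j ∈ univ.filter (fun j => π k < π j), g j * qmax j * q₁ j)
        / (g k * qmax k)) →
      (∀ k, q₂ k = ((2 : ℝ) ^ (θ₂ / B) - 1) *
        (σ2 * B + ∑ j ∈ univ.filter (fun j => π k < π j), g j * qmax j * q₂ j)
        / (g k * qmax k)) →
      ∀ k, q₁ k < q₂ k) ∧
    (∀ q₀ : Fin K → ℝ,
      (∀ k, q₀ k = ((2 : ℝ) ^ ((0 : ℝ) / B) - 1) *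
        (σ2 * B + ∑ j ∈ univ.filter (fun j => π k < π j), g j * qmax j * q₀ j)
        / (g k * qmax k)) →
      ∀ k, q₀ k = 0) ∧
    (∀ θ₁ θ₂ : ℝ, 0 ≤ θ₁ → θ₁ ≤ θ₂ →
      ∀ q₁ q₂ : Fin K → ℝ,
      (∀ k, q₁ k = ((2 : ℝ) ^ (θ₁ / B) - 1) *
        (σ2 * B + ∑ j ∈ univ.filter (fun j => π k < π j), g j * qmax j * q₁ j)
        / (g k * qmax k)) →
      (∀ k, q₂ k = ((2 : ℝ) ^ (θ₂ / B) - 1) *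
        (σ2 * B + ∑ j ∈ univ.filter (fun j => π k < π j), g j * qmax j * q₂ j)
        / (g k * qmax k)) →
      (∀ k, q₂ k ≤ 1) → ∀ k, q₁ k ≤ 1) := by
  have hw : ∀ k, 0 < g k * qmax k := fun k => mul_pos (hg k) (hqmax k)
  have hN : 0 < σ2 * B := mul_pos hσ2 hB
  refine ⟨?_, ?_, ?_⟩
  · intro θ₁ θ₂ hθ₁ h q₁ q₂ hq₁ hq₂
    exact IsPowerRecursion.strictMono (f := π) hq₁ hq₂ hw hN
      (two_rpow_div_sub_one_nonneg hB hθ₁) (by linarith [two_rpow_div_strictMono hB h])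
  · intro q₀ hq₀
    exact IsPowerRecursion.eq_zero (f := π) hq₀ (by simp)
  · intro θ₁ θ₂ hθ₁ h q₁ q₂ hq₁ hq₂ hq₂_le k
    exact (IsPowerRecursion.mono (f := π) hq₁ hq₂ hw hN.le (two_rpow_div_sub_one_nonneg hB hθ₁)
      (by linarith [(two_rpow_div_strictMono hB).monotone h]) k).trans (hq₂_le k)

open Finset in
/-- Each recursively-defined uplink normalized power `q'_k(θ)` is strictly
increasing in `θ ≥ 0` and vanishes at `θ = 0`; consequently the feasibility
condition `q'_k(θ) ≤ 1` is monotone in `θ` (justifying the bisection search of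
Algorithm 3). -/
theorem stmt_16
    (K : ℕ) (hK : 1 ≤ K)
    (B σ2 : ℝ) (hB : 0 < B) (hσ2 : 0 < σ2)
    (g qmax : Fin K → ℝ) (hg : ∀ k, 0 < g k) (hqmax : ∀ k, 0 < qmax k)
    (π : Equiv.Perm (Fin K)) :
    (∀ θ₁ θ₂ : ℝ, 0 ≤ θ₁ → θ₁ < θ₂ →
      ∀ q₁ q₂ : Fin K → ℝ,
      (∀ k, q₁ k = ((2 : ℝ) ^ (θ₁ / B) - 1) *
        (σ2 * B + ∑ j ∈ univ.filter (fun j => π k < π j), g j * qmax j * q₁ j)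
        / (g k * qmax k)) →
      (∀ k, q₂ k = ((2 : ℝ) ^ (θ₂ / B) - 1) *
        (σ2 * B + ∑ j ∈ univ.filter (fun j => π k < π j), g j * qmax j * q₂ j)
        / (g k * qmax k)) →
      ∀ k, q₁ k < q₂ k) ∧
    (∀ q₀ : Fin K → ℝ,
      (∀ k, q₀ k = ((2 : ℝ) ^ ((0 : ℝ) / B) - 1) *
        (σ2 * B + ∑ j ∈ univ.filter (fun j => π k < π j), g j * qmax j * q₀ j)
        / (g k * qmax k)) →
      ∀ k, q₀ k = 0) ∧
    (∀ θ₁ θ₂ : ℝ, 0 ≤ θ₁ → θ₁ ≤ θ₂ →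
      ∀ q₁ q₂ : Fin K → ℝ,
      (∀ k, q₁ k = ((2 : ℝ) ^ (θ₁ / B) - 1) *
        (σ2 * B + ∑ j ∈ univ.filter (fun j => π k < π j), g j * qmax j * q₁ j)
        / (g k * qmax k)) →
      (∀ k, q₂ k = ((2 : ℝ) ^ (θ₂ / B) - 1) *
        (σ2 * B + ∑ j ∈ univ.filter (fun j => π k < π j), g j * qmax j * q₂ j)
        / (g k * qmax k)) →
      (∀ k, q₂ k ≤ 1) → ∀ k, q₁ k ≤ 1) :=
  stmt_16_general K B σ2 hB hσ2 g qmax hg hqmax π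
end
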